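/- Let v be an admissible weight function. If sup{ v(x)/v(y) : 0 ≤ x ≤ y } = ∞, then the semigroup 𝒯 = {T_t : t ≥ 0} of left translation operators on C_{0,v}(ℝ₊) has infinite topological entropy: there exists a compact set K ⊆ C_{0,v}(ℝ₊) with h(𝒯,K) = ∞. -/

import Mathlib

open MeasureTheory Filter Set
open scoped ENNReal

/-- The `L^p_v` norm of a function on `[0,∞)`:
`‖f‖ = (∫₀^∞ |f(x)|^p v(x) dx)^(1/p)`. -/
noncomputable def lpNorm (p : ℝ) (v : ℝ → ℝ) (f : ℝ → ℝ) : ℝ :=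
  (∫ x in Set.Ici (0:ℝ), |f x| ^ p * v x) ^ (1 / p)

/-- Membership in the weighted Lebesgue space `L^p_v(ℝ₊)`. -/
def MemLpW (p : ℝ) (v : ℝ → ℝ) (f : ℝ → ℝ) : Prop :=
  AEStronglyMeasurable f (volume.restrict (Set.Ici (0:ℝ))) ∧
    IntegrableOn (fun x => |f x| ^ p * v x) (Set.Ici (0:ℝ))

/-- The left translation operator `(T_t f)(x) = f (x + t)`. -/
def translateW (t : ℝ) (f : ℝ → ℝ) : ℝ → ℝ := fun x => f (x + t)

/-- `v` is an admissible weight function: strictly positive, locally integrable on `[0,∞)`,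
and there are `M ≥ 1`, `w ≥ 0` with `v x ≤ M * exp (w*t) * v (x+t)` for all `x, t ≥ 0`. -/
def AdmissibleWeight (v : ℝ → ℝ) : Prop :=
  (∀ x, 0 ≤ x → 0 < v x) ∧
  (∀ a, 0 ≤ a → IntegrableOn v (Set.Icc (0:ℝ) a)) ∧
  ∃ M, 1 ≤ M ∧ ∃ w, 0 ≤ w ∧ ∀ x, 0 ≤ x → ∀ t, 0 ≤ t →
    v x ≤ M * Real.exp (w * t) * v (x + t)

/-- The set `{ v x / v y : 0 ≤ x ≤ y }`. -/
def ratioSet (v : ℝ → ℝ) : Set ℝ := {r | ∃ x y, 0 ≤ x ∧ x ≤ y ∧ r = v x / v y}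

/-- Membership in `C_{0,v}(ℝ₊)`: continuous on `[0,∞)` with `|f x| * v x → 0` as `x → ∞`. -/
def MemC0 (v : ℝ → ℝ) (f : ℝ → ℝ) : Prop :=
  ContinuousOn f (Set.Ici (0:ℝ)) ∧
    Filter.Tendsto (fun x => |f x| * v x) Filter.atTop (nhds 0)

/-- The norm on `C_{0,v}(ℝ₊)`: `‖f‖ = sup { |f x| * v x : x ≥ 0 }`. -/
noncomputable def c0Norm (v : ℝ → ℝ) (f : ℝ → ℝ) : ℝ :=
  sSup ((fun x => |f x| * v x) '' Set.Ici (0:ℝ))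

/-- `S` is a `(t,ε)`-separated set for the family `{T_u : u ≥ 0}` with respect to the
distance `d`: distinct points of `S` are `ε`-apart at some time `u ∈ [0,t]`. -/
def IsSepSet {X : Type*} (d : X → X → ℝ) (T : ℝ → X → X) (t ε : ℝ) (S : Set X) : Prop :=
  ∀ f ∈ S, ∀ g ∈ S, f ≠ g → ∃ u ∈ Set.Icc (0:ℝ) t, ε ≤ d (T u f) (T u g)

/-- The largest cardinality `s_{t,ε}(𝒯,K)` of a `(t,ε)`-separated subset of `K`
(as an extended natural number, viewed in `ℝ≥0∞`). -/
noncomputable def maxSep {X : Type*} (d : X → X → ℝ) (T : ℝ → X → X) (K : Set X)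
    (t ε : ℝ) : ℝ≥0∞ :=
  ⨆ (S : Finset X) (_ : ↑S ⊆ K ∧ IsSepSet d T t ε ↑S), (S.card : ℝ≥0∞)

open Classical in
/-- Extended-real logarithm of an extended nonnegative real. -/
noncomputable def elog (x : ℝ≥0∞) : EReal :=
  if x = ⊤ then ⊤ else ((Real.log x.toReal : ℝ) : EReal)

/-- The topological entropy `h(𝒯,K)` of the family `{T_u : u ≥ 0}` on the set `K`,
with respect to the distance `d`; since `ε ↦ limsup_t (1/t) log s_{t,ε}` is antitone,
the limit as `ε → 0⁺` is the supremum over `ε > 0`. -/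
noncomputable def entropyOn {X : Type*} (d : X → X → ℝ) (T : ℝ → X → X) (K : Set X) : EReal :=
  ⨆ (ε : ℝ) (_ : 0 < ε),
    Filter.limsup (fun t : ℝ => ((t⁻¹ : ℝ) : EReal) * elog (maxSep d T K t ε)) Filter.atTop

/-- Sequential compactness of a set with respect to a (pseudo)distance `d`; for metric
spaces this is equivalent to compactness. -/
def DSeqCompact {X : Type*} (d : X → X → ℝ) (K : Set X) : Prop :=
  ∀ u : ℕ → X, (∀ n, u n ∈ K) → ∃ g ∈ K, ∃ φ : ℕ → ℕ, StrictMono φ ∧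
    Filter.Tendsto (fun n => d (u (φ n)) g) Filter.atTop (nhds 0)

/-- The topological entropy `h(𝒯) = sup { h(𝒯,K) : K ⊆ A compact }` of the family
`{T_u : u ≥ 0}` on the space `A`, with respect to the distance `d`. -/
noncomputable def entropyFam {X : Type*} (d : X → X → ℝ) (T : ℝ → X → X) (A : Set X) : EReal :=
  ⨆ (K : Set X) (_ : K ⊆ A ∧ DSeqCompact d K), entropyOn d T K

/-!
Choose `0 ≤ x ≤ y` with `v x > B * M * exp w * v y`. Admissibility forces the gap `L = y - x`
to exceed `1 + log B / w`, so `L → ∞` as `B → ∞`. On `[y - 1, y]` place `N ≈ n L` disjoint tents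
of height `1 / v x` and keep any subset of them: the `2 ^ N` resulting functions have weighted
norm at most `1 / B`, because `v ≤ M * exp w * v y < v x / B` there. Two of them that differ in the
`j`-th tent are `1`-apart at the time `u ∈ [0, L]` that translates the apex of that tent to `x`.
Hence `s_{L,1} ≥ 2 ^ (n L)`, and the union of these families over `B = k + 2`, together with their
limit `0`, is a compact set of infinite entropy.
-/

section Dynamics

variable {X : Type*} {d : X → X → ℝ}

lemma dSeqCompact_insert_iUnion (hself : ∀ f, d f f = 0) {g : X} {S : ℕ → Finset X}
    {δ : ℕ → ℝ} (hδ : Tendsto δ atTop (nhds 0)) (hS : ∀ k, ∀ f ∈ S k, 0 ≤ d f g ∧ d f g ≤ δ k) :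
    DSeqCompact d (insert g (⋃ k, ↑(S k))) := by
  classical
  intro u hu
  by_cases hrec : ∃ f, ∃ᶠ n in atTop, u n = f
  · obtain ⟨f, hf⟩ := hrec
    obtain ⟨φ, hφ, hφf⟩ := extraction_of_frequently_atTop hf
    refine ⟨f, hφf 0 ▸ hu (φ 0), φ, hφ, ?_⟩
    simp only [hφf, hself, tendsto_const_nhds]
  · simp only [not_exists, not_frequently] at hrec
    refine ⟨g, mem_insert _ _, id, strictMono_id, Metric.tendsto_nhds.2 fun ε hε => ?_⟩
    obtain ⟨m, hm⟩ := eventually_atTop.1 (hδ.eventually (gt_mem_nhds hε))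
    have hfar : ∀ᶠ n in atTop, ∀ f ∈ (Finset.range m).biUnion S, u n ≠ f :=
      (Finset.eventually_all _).2 fun f _ => hrec f
    filter_upwards [hfar] with n hn
    rcases hu n with hg | hn'
    · simp [hg, hself, hε]
    obtain ⟨k, hk⟩ := mem_iUnion.1 hn'
    have hmk : m ≤ k := not_lt.1 fun hkm =>
      hn (u n) (Finset.mem_biUnion.2 ⟨k, Finset.mem_range.2 hkm, hk⟩) rfl
    obtain ⟨h0, hle⟩ := hS k (u n) hk
    rw [id, Real.dist_eq, sub_zero, abs_of_nonneg h0]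
    exact hle.trans_lt (hm k hmk)

variable {T : ℝ → X → X} {K : Set X}

lemma card_le_maxSep {t ε : ℝ} {S : Finset X} (hSK : ↑S ⊆ K) (hS : IsSepSet d T t ε ↑S) :
    (S.card : ℝ≥0∞) ≤ maxSep d T K t ε :=
  le_iSup₂ (f := fun (S : Finset X) (_ : ↑S ⊆ K ∧ IsSepSet d T t ε ↑S) => (S.card : ℝ≥0∞))
    S ⟨hSK, hS⟩

lemma log_le_elog {n : ℕ} {m : ℝ≥0∞} (hn : n ≠ 0) (h : (n : ℝ≥0∞) ≤ m) :
    (Real.log n : EReal) ≤ elog m := by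
  rw [elog]
  split_ifs with hm
  · exact le_top
  · have hpos : (0 : ℝ) < n := by exact_mod_cast Nat.pos_of_ne_zero hn
    exact EReal.coe_le_coe_iff.2
      (Real.log_le_log hpos (by simpa using ENNReal.toReal_mono hm h))

lemma coe_le_inv_mul_of_mul_le {t a : ℝ} (ht : 0 < t) {y : EReal} (h : ((t * a : ℝ) : EReal) ≤ y) :
    (a : EReal) ≤ ((t⁻¹ : ℝ) : EReal) * y := by
  induction y with
  | bot => exact absurd (le_bot_iff.1 h) (EReal.coe_ne_bot _)
  | coe y =>
    rw [← EReal.coe_mul, EReal.coe_le_coe_iff] at *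
    rwa [le_inv_mul_iff₀ ht]
  | top => rw [EReal.coe_mul_top_of_pos (inv_pos.2 ht)]; exact le_top

lemma entropyOn_eq_top_of_separated {ε : ℝ} (hε : 0 < ε) {t : ℕ → ℝ} {S : ℕ → Finset X}
    (hSK : ∀ k, ↑(S k) ⊆ K) (hS : ∀ k, IsSepSet d T (t k) ε ↑(S k))
    (ht : Tendsto t atTop atTop)
    (hgrowth : Tendsto (fun k => Real.log (S k).card / t k) atTop atTop) :
    entropyOn d T K = ⊤ := by
  refine top_unique (le_iSup₂_of_le ε hε ?_)
  refine top_le_iff.2 ((EReal.eq_top_iff_forall_lt _).2 fun y => ?_)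
  refine (EReal.coe_lt_coe_iff.2 (lt_add_one y)).trans_le (le_limsup_of_frequently_le' ?_)
  refine frequently_atTop.2 fun a => ?_
  obtain ⟨k, hta, htpos, hyk, hpos⟩ := ((ht.eventually_ge_atTop a).and
    ((ht.eventually_gt_atTop 0).and ((hgrowth.eventually_ge_atTop (y + 1)).and
      (hgrowth.eventually_gt_atTop 0)))).exists
  refine ⟨t k, hta, coe_le_inv_mul_of_mul_le htpos ?_⟩
  have hcard : (S k).card ≠ 0 := fun h0 => by simp [h0] at hpos
  refine le_trans (EReal.coe_le_coe_iff.2 ?_) (log_le_elog hcard (card_le_maxSep (hSK k) (hS k)))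
  rwa [← le_div_iff₀' htpos]

end Dynamics

section WeightedNorm

variable {v f : ℝ → ℝ} {C : ℝ}

lemma c0Norm_le (hC : ∀ x, 0 ≤ x → |f x| * v x ≤ C) : c0Norm v f ≤ C :=
  csSup_le (nonempty_Ici.image _) (forall_mem_image.2 hC)

lemma le_c0Norm (hC : ∀ x, 0 ≤ x → |f x| * v x ≤ C) {x : ℝ} (hx : 0 ≤ x) :
    |f x| * v x ≤ c0Norm v f :=
  le_csSup ⟨C, forall_mem_image.2 hC⟩ (mem_image_of_mem _ hx)

lemma c0Norm_sub_self (v f : ℝ → ℝ) : c0Norm v (f - f) = 0 := by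
  simp [c0Norm, nonempty_Ici.image_const]

end WeightedNorm

section Weight

variable {v : ℝ → ℝ} {M w : ℝ}
  (hvle : ∀ x, 0 ≤ x → ∀ t, 0 ≤ t → v x ≤ M * Real.exp (w * t) * v (x + t))

include hvle

lemma weight_le_of_le (hM : 0 ≤ M) (hw : 0 ≤ w) {y z D : ℝ} (hvy : 0 ≤ v y) (hz : 0 ≤ z)
    (hzy : z ≤ y) (hD : y - z ≤ D) : v z ≤ M * Real.exp (w * D) * v y :=
  calc v z ≤ M * Real.exp (w * (y - z)) * v (z + (y - z)) := hvle z hz _ (sub_nonneg.2 hzy)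
    _ ≤ M * Real.exp (w * D) * v y := by rw [add_sub_cancel]; gcongr

lemma abs_mul_le_of_eq_zero_of_notMem_Icc (hvpos : ∀ x, 0 ≤ x → 0 < v x) (hM : 0 ≤ M)
    (hw : 0 ≤ w) {f : ℝ → ℝ} {h a b z : ℝ} (ha : 0 ≤ a) (hab : a ≤ b) (hf : ∀ z, |f z| ≤ h)
    (hzero : ∀ z, 0 ≤ z → z ∉ Icc a b → f z = 0) (hz : 0 ≤ z) :
    |f z| * v z ≤ h * (M * Real.exp (w * (b - a)) * v b) := by
  have hvb := hvpos b (ha.trans hab)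
  have hh : 0 ≤ h := (abs_nonneg _).trans (hf z)
  by_cases hzab : z ∈ Icc a b
  · exact mul_le_mul (hf z)
      (weight_le_of_le hvle hM hw hvb.le hz hzab.2 (by linarith [hzab.1]))
      (hvpos z hz).le hh
  · rw [hzero z hz hzab, abs_zero, zero_mul]
    positivity

lemma one_add_log_div_lt_of_ratio_lt (hM : 0 < M) (hw : 0 ≤ w) {x y B : ℝ} (hvy : 0 < v y)
    (hx : 0 ≤ x) (hxy : x ≤ y) (hB : 1 < B) (hratio : B * (M * Real.exp w) * v y < v x) :
    0 < w ∧ 1 + Real.log B / w < y - x := by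
  have hlt : M * (B * Real.exp w) < M * Real.exp (w * (y - x)) := by
    have := hratio.trans_le (weight_le_of_le hvle hM.le hw hvy.le hx hxy le_rfl)
    exact lt_of_mul_lt_mul_right (by linarith) hvy.le
  have hexp : Real.log B + w < w * (y - x) := by
    rw [← Real.exp_lt_exp, Real.exp_add, Real.exp_log (by linarith)]
    exact lt_of_mul_lt_mul_left hlt hM.le
  have hlogB := Real.log_pos hB
  have hw0 : 0 < w := hw.lt_of_ne fun h => by subst h; linarith
  refine ⟨hw0, ?_⟩
  have : Real.log B / w < y - x - 1 := by rw [div_lt_iff₀ hw0]; linarith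
  linarith

end Weight

noncomputable def tent (c r x : ℝ) : ℝ := max 0 (1 - |x - c| / r)

lemma tent_nonneg (c r x : ℝ) : 0 ≤ tent c r x := le_max_left _ _

lemma tent_le_one {r : ℝ} (hr : 0 < r) (c x : ℝ) : tent c r x ≤ 1 :=
  max_le zero_le_one (sub_le_self _ (div_nonneg (abs_nonneg _) hr.le))

lemma tent_self (c r : ℝ) : tent c r c = 1 := by simp [tent]

lemma tent_eq_zero {c r x : ℝ} (hr : 0 < r) (h : r ≤ |x - c|) : tent c r x = 0 :=
  max_eq_left (sub_nonpos.2 ((one_le_div hr).2 h))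

lemma continuous_tent (c r : ℝ) : Continuous (tent c r) := by
  unfold tent; fun_prop

noncomputable def tentCenter (c r : ℝ) (j : ℕ) : ℝ := c + (2 * j + 1) * r

lemma two_mul_le_abs_tentCenter_sub {c r : ℝ} (hr : 0 < r) {i j : ℕ} (hij : i ≠ j) :
    2 * r ≤ |tentCenter c r i - tentCenter c r j| := by
  have hdiff : tentCenter c r i - tentCenter c r j = 2 * r * ((i : ℝ) - j) := by
    unfold tentCenter; ring
  have hij' : (1 : ℝ) ≤ |(i : ℝ) - j| := by
    have h : (1 : ℤ) ≤ |(i : ℤ) - j| := Int.one_le_abs (sub_ne_zero.2 (by exact_mod_cast hij))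
    exact_mod_cast h
  rw [hdiff, abs_mul, abs_of_pos (by positivity)]
  exact le_mul_of_one_le_right (by positivity) hij'

lemma tent_tentCenter_eq_zero {c r x : ℝ} (hr : 0 < r) {i j : ℕ} (hij : i ≠ j)
    (hx : tent (tentCenter c r i) r x ≠ 0) : tent (tentCenter c r j) r x = 0 := by
  have hxi : |x - tentCenter c r i| < r := not_le.1 fun h => hx (tent_eq_zero hr h)
  have hij := two_mul_le_abs_tentCenter_sub (c := c) hr hij
  have htri := abs_sub_le (tentCenter c r i) x (tentCenter c r j)
  have hxi' := abs_sub_comm x (tentCenter c r i)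
  exact tent_eq_zero hr (by linarith)

lemma tentCenter_mem_Ioo {c r : ℝ} (hr : 0 < r) {N j : ℕ} (hj : j < N) :
    tentCenter c r j ∈ Ioo c (c + 2 * N * r) := by
  have hjN : (j : ℝ) + 1 ≤ N := by exact_mod_cast hj
  constructor <;> unfold tentCenter <;> nlinarith

lemma tent_tentCenter_eq_zero_of_notMem {c r x : ℝ} (hr : 0 < r) {N j : ℕ} (hj : j < N)
    (hx : x ∉ Ioo c (c + 2 * N * r)) : tent (tentCenter c r j) r x = 0 := by
  have hjN : (j : ℝ) + 1 ≤ N := by exact_mod_cast hj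
  apply tent_eq_zero hr
  rcases not_and_or.1 hx with hx | hx <;> unfold tentCenter <;>
    [rw [abs_of_neg (by nlinarith)]; rw [abs_of_pos (by nlinarith)]] <;> nlinarith

lemma sum_tent_tentCenter_le_one {c r : ℝ} (hr : 0 < r) (N : ℕ) (x : ℝ) :
    ∑ j : Fin N, tent (tentCenter c r j) r x ≤ 1 := by
  by_cases h : ∃ j : Fin N, tent (tentCenter c r j) r x ≠ 0
  · obtain ⟨j, hj⟩ := h
    rw [Finset.sum_eq_single j (fun i _ hij =>
      tent_tentCenter_eq_zero hr (Fin.val_injective.ne hij.symm) hj) (by simp)]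
    exact tent_le_one hr _ _
  · simp only [ne_eq, not_exists, not_not] at h
    simp [h]

section TentSum

variable {c r h : ℝ} {N : ℕ}

noncomputable def tentSum (c r : ℝ) (N : ℕ) (h : ℝ) (s : Fin N → Bool) (x : ℝ) : ℝ :=
  h * ∑ j, if s j then tent (tentCenter c r j) r x else 0

lemma abs_tentSum_le (hr : 0 < r) (hh : 0 ≤ h) (s : Fin N → Bool) (x : ℝ) :
    |tentSum c r N h s x| ≤ h := by
  have hsum_nonneg : 0 ≤ ∑ j, if s j then tent (tentCenter c r j) r x else 0 :=
    Finset.sum_nonneg fun j _ => by split_ifs; exacts [tent_nonneg _ _ _, le_rfl]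
  have hsum_le : (∑ j, if s j then tent (tentCenter c r j) r x else 0) ≤ 1 :=
    (Finset.sum_le_sum fun j _ => by split_ifs; exacts [le_rfl, tent_nonneg _ _ _]).trans
      (sum_tent_tentCenter_le_one hr N x)
  rw [tentSum, abs_mul, abs_of_nonneg hh, abs_of_nonneg hsum_nonneg]
  exact mul_le_of_le_one_right hh hsum_le

lemma tentSum_tentCenter (hr : 0 < r) (s : Fin N → Bool) (j : Fin N) :
    tentSum c r N h s (tentCenter c r j) = if s j then h else 0 := by
  rw [tentSum, Finset.sum_eq_single j fun i _ hij => by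
    rw [tent_tentCenter_eq_zero hr (Fin.val_injective.ne hij.symm) (by simp [tent_self]),
      ite_self]]
  · split_ifs <;> simp [tent_self]
  · simp

lemma tentSum_eq_zero (hr : 0 < r) (s : Fin N → Bool) {x : ℝ}
    (hx : x ∉ Ioo c (c + 2 * N * r)) : tentSum c r N h s x = 0 := by
  simp [tentSum, tent_tentCenter_eq_zero_of_notMem hr _ hx]

lemma continuous_tentSum (s : Fin N → Bool) : Continuous (tentSum c r N h s) := by
  unfold tentSum
  refine continuous_const.mul (continuous_finsetSum _ fun j _ => ?_)
  split_ifs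
  exacts [continuous_tent _ _, continuous_const]

lemma tentSum_injective (hr : 0 < r) (hh : h ≠ 0) : Function.Injective (tentSum c r N h) := by
  intro s s' hss'
  funext j
  have hj := congrFun hss' (tentCenter c r j)
  rw [tentSum_tentCenter hr, tentSum_tentCenter hr] at hj
  revert hj
  cases s j <;> cases s' j <;> simp [hh, Ne.symm hh]

lemma abs_tentSum_sub_tentSum_tentCenter (hr : 0 < r) {s s' : Fin N → Bool} {j : Fin N}
    (hj : s j ≠ s' j) :
    |tentSum c r N h s (tentCenter c r j) - tentSum c r N h s' (tentCenter c r j)| = |h| := by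
  rw [tentSum_tentCenter hr, tentSum_tentCenter hr]
  revert hj
  cases s j <;> cases s' j <;> simp

open Classical in
noncomputable def tentFamily (c r : ℝ) (N : ℕ) (h : ℝ) : Finset (ℝ → ℝ) :=
  Finset.univ.image (tentSum c r N h)

lemma card_tentFamily (hr : 0 < r) (hh : h ≠ 0) : (tentFamily c r N h).card = 2 ^ N := by
  classical
  rw [tentFamily, Finset.card_image_of_injective _ (tentSum_injective hr hh)]
  simp

lemma mem_tentFamily {f : ℝ → ℝ} : f ∈ tentFamily c r N h ↔ ∃ s, tentSum c r N h s = f := by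
  simp [tentFamily]

lemma memC0_of_mem_tentFamily (v : ℝ → ℝ) (hr : 0 < r) {f : ℝ → ℝ}
    (hf : f ∈ tentFamily c r N h) : MemC0 v f := by
  obtain ⟨s, rfl⟩ := mem_tentFamily.1 hf
  refine ⟨(continuous_tentSum s).continuousOn, tendsto_const_nhds.congr' ?_⟩
  filter_upwards [eventually_ge_atTop (c + 2 * N * r)] with x hx
  rw [tentSum_eq_zero hr s fun hx' => hx'.2.not_ge hx, abs_zero, zero_mul]

section SeparatedFamilies

variable {v : ℝ → ℝ} {M w : ℝ}
  (hvle : ∀ x, 0 ≤ x → ∀ t, 0 ≤ t → v x ≤ M * Real.exp (w * t) * v (x + t))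

include hvle

lemma abs_mul_le_of_mem_tentFamily (hvpos : ∀ x, 0 ≤ x → 0 < v x) (hM : 0 ≤ M) (hw : 0 ≤ w)
    (hr : 0 < r) (hc : 0 ≤ c) (hh : 0 ≤ h) {f : ℝ → ℝ} (hf : f ∈ tentFamily c r N h) {z : ℝ}
    (hz : 0 ≤ z) : |f z| * v z ≤ h * (M * Real.exp (w * (2 * N * r)) * v (c + 2 * N * r)) := by
  obtain ⟨s, rfl⟩ := mem_tentFamily.1 hf
  have := abs_mul_le_of_eq_zero_of_notMem_Icc hvle hvpos hM hw hc
    (le_add_of_nonneg_right (by positivity)) (abs_tentSum_le hr hh s)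
    (fun z _ hz => tentSum_eq_zero hr s fun hz' => hz (Ioo_subset_Icc_self hz')) hz
  rwa [add_sub_cancel_left] at this

lemma isSepSet_tentFamily (hvpos : ∀ x, 0 ≤ x → 0 < v x) (hM : 0 ≤ M) (hw : 0 ≤ w)
    (hr : 0 < r) {x : ℝ} (hx : 0 ≤ x) (hxc : x ≤ c) :
    IsSepSet (fun f g => c0Norm v (f - g)) translateW (c + 2 * N * r - x) 1
      ↑(tentFamily c r N (v x)⁻¹) := by
  intro f hf g hg hfg
  obtain ⟨s, rfl⟩ := mem_tentFamily.1 hf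
  obtain ⟨s', rfl⟩ := mem_tentFamily.1 hg
  obtain ⟨j, hj⟩ := Function.ne_iff.1 fun hss' => hfg (congrArg _ hss')
  have hq := tentCenter_mem_Ioo (c := c) hr j.isLt
  set q := tentCenter c r j
  refine ⟨q - x, ⟨by linarith [hq.1], by linarith [hq.2]⟩, ?_⟩
  set G := translateW (q - x) (tentSum c r N (v x)⁻¹ s) -
    translateW (q - x) (tentSum c r N (v x)⁻¹ s')
  have hvx := hvpos x hx
  have hGle : ∀ z, |G z| ≤ 2 * (v x)⁻¹ := fun z =>
    (abs_sub _ _).trans (by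
      simp only [translateW]
      linarith [abs_tentSum_le (c := c) hr (inv_nonneg.2 hvx.le) s (z + (q - x)),
        abs_tentSum_le (c := c) hr (inv_nonneg.2 hvx.le) s' (z + (q - x))])
  have hGzero : ∀ z, 0 ≤ z → z ∉ Icc 0 (c + 2 * N * r) → G z = 0 := by
    intro z hz hzb
    have hout : z + (q - x) ∉ Ioo c (c + 2 * N * r) := fun h' =>
      hzb ⟨hz, by linarith [h'.2, hq.1]⟩
    simp [G, translateW, tentSum_eq_zero hr _ hout]
  have hGx : |G x| * v x = 1 := by
    simp only [G, Pi.sub_apply, translateW, add_sub_cancel]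
    rw [abs_tentSum_sub_tentSum_tentCenter hr hj, abs_inv, abs_of_pos hvx,
      inv_mul_cancel₀ hvx.ne']
  rw [← hGx]
  exact le_c0Norm (fun z hz => abs_mul_le_of_eq_zero_of_notMem_Icc hvle hvpos hM hw le_rfl
    (by linarith [hq.1, hq.2]) hGle hGzero hz) hx

lemma exists_separated_finset (hvpos : ∀ x, 0 ≤ x → 0 < v x) (hM : 0 < M) (hw : 0 ≤ w)
    {x y B : ℝ} (hx : 0 ≤ x) (hxy : x ≤ y) (hB : 1 < B)
    (hratio : B * (M * Real.exp w) * v y < v x) (n : ℕ) :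
    ∃ S : Finset (ℝ → ℝ), (∀ f ∈ S, MemC0 v f) ∧ (∀ f ∈ S, ∀ z, 0 ≤ z → |f z| * v z ≤ B⁻¹) ∧
      IsSepSet (fun f g => c0Norm v (f - g)) translateW (y - x) 1 ↑S ∧
      n * (y - x) ≤ Real.log S.card := by
  obtain ⟨hw0, hgap⟩ :=
    one_add_log_div_lt_of_ratio_lt hvle hM hw (hvpos y (hx.trans hxy)) hx hxy hB hratio
  have hxy1 : x ≤ y - 1 := by linarith [div_nonneg (Real.log_pos hB).le hw0.le]
  have hvx := hvpos x hx
  set N := ⌈n * (y - x) / Real.log 2⌉₊ + 1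
  set r := (2 * (N : ℝ))⁻¹
  have hr : 0 < r := by positivity
  have hNr : 2 * N * r = 1 := mul_inv_cancel₀ (by positivity)
  have hcy : y - 1 + 2 * N * r = y := by rw [hNr, sub_add_cancel]
  refine ⟨tentFamily (y - 1) r N (v x)⁻¹, fun f hf => memC0_of_mem_tentFamily v hr hf,
    fun f hf z hz => ?_, ?_, ?_⟩
  · have := abs_mul_le_of_mem_tentFamily hvle hvpos hM.le hw hr (hx.trans hxy1)
      (inv_nonneg.2 hvx.le) hf hz
    rw [hcy, hNr, mul_one] at this
    refine this.trans ?_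
    rw [inv_mul_le_iff₀ hvx, ← div_eq_mul_inv, le_div_iff₀ (by linarith)]
    linarith
  · simpa only [hcy] using isSepSet_tentFamily hvle hvpos hM.le hw hr hx hxy1 (N := N)
  · have hlog2 := Real.log_pos one_lt_two
    have hN : n * (y - x) / Real.log 2 ≤ N :=
      (Nat.le_ceil _).trans (by exact_mod_cast Nat.le_succ _)
    rw [card_tentFamily hr (inv_ne_zero hvx.ne'), Nat.cast_pow, Real.log_pow, Nat.cast_ofNat]
    exact (div_le_iff₀ hlog2).1 hN

lemma exists_separated_families (hvpos : ∀ x, 0 ≤ x → 0 < v x) (hM : 0 < M) (hw : 0 ≤ w)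
    (hratio : ∀ B, ∃ x y, 0 ≤ x ∧ x ≤ y ∧ B * v y < v x) :
    ∃ (t : ℕ → ℝ) (S : ℕ → Finset (ℝ → ℝ)), Tendsto t atTop atTop ∧
      (∀ k, ∀ f ∈ S k, MemC0 v f) ∧
      (∀ k, ∀ f ∈ S k, ∀ z, 0 ≤ z → |f z| * v z ≤ ((k : ℝ) + 2)⁻¹) ∧
      (∀ k, IsSepSet (fun f g => c0Norm v (f - g)) translateW (t k) 1 ↑(S k)) ∧
      Tendsto (fun k => Real.log (S k).card / t k) atTop atTop := by
  choose x y hx hxy hlt using fun k : ℕ => hratio (((k : ℝ) + 2) * (M * Real.exp w))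
  have hB (k : ℕ) : (1 : ℝ) < k + 2 := by linarith [k.cast_nonneg (α := ℝ)]
  choose S hSmem hSle hSsep hScard using fun k =>
    exists_separated_finset hvle hvpos hM hw (hx k) (hxy k) (hB k) (hlt k) k
  have hgap (k : ℕ) := one_add_log_div_lt_of_ratio_lt hvle hM hw
    (hvpos _ ((hx k).trans (hxy k))) (hx k) (hxy k) (hB k) (hlt k)
  have hw0 := (hgap 0).1
  refine ⟨fun k => y k - x k, S, ?_, hSmem, hSle, hSsep,
    tendsto_atTop_mono (fun k => ?_) tendsto_natCast_atTop_atTop⟩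
  · refine tendsto_atTop_mono (fun k => (lt_add_of_pos_left _ one_pos).le.trans (hgap k).2.le) ?_
    exact (Real.tendsto_log_atTop.comp
      (tendsto_atTop_add_const_right _ 2 tendsto_natCast_atTop_atTop)).atTop_div_const hw0
  · rw [le_div_iff₀ (by linarith [(hgap k).2, div_pos (Real.log_pos (hB k)) hw0])]
    exact hScard k

end SeparatedFamilies

end TentSum

theorem c0_infinite_entropy_of_unbounded_ratio
    (v : ℝ → ℝ) (hv : AdmissibleWeight v)
    (hsup : ∀ B : ℝ, ∃ r ∈ ratioSet v, B < r) :
    ∃ K : Set (ℝ → ℝ), K ⊆ {f | MemC0 v f} ∧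
      DSeqCompact (fun f g => c0Norm v (f - g)) K ∧
      entropyOn (fun f g => c0Norm v (f - g)) translateW K = ⊤ := by
  obtain ⟨hvpos, -, M, hM, w, hw, hvle⟩ := hv
  have hratio (B : ℝ) : ∃ x y, 0 ≤ x ∧ x ≤ y ∧ B * v y < v x := by
    obtain ⟨_, ⟨x, y, hx, hxy, rfl⟩, hlt⟩ := hsup B
    exact ⟨x, y, hx, hxy, (lt_div_iff₀ (hvpos y (hx.trans hxy))).1 hlt⟩
  obtain ⟨t, S, ht, hSmem, hSle, hSsep, hgrowth⟩ :=
    exists_separated_families hvle hvpos (one_pos.trans_le hM) hw hratio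
  refine ⟨insert 0 (⋃ k, ↑(S k)), ?_, ?_, ?_⟩
  · rintro f (rfl | hf)
    · exact ⟨continuousOn_const, by simp⟩
    · obtain ⟨k, hk⟩ := mem_iUnion.1 hf
      exact hSmem k f hk
  · refine dSeqCompact_insert_iUnion (fun f => c0Norm_sub_self v f)
      (tendsto_inv_atTop_zero.comp (tendsto_atTop_add_const_right _ 2
        tendsto_natCast_atTop_atTop)) fun k f hf => ?_
    have hbound : ∀ z, 0 ≤ z → |(f - 0) z| * v z ≤ ((k : ℝ) + 2)⁻¹ := by
      simpa only [sub_zero] using hSle k f hf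
    exact ⟨(mul_nonneg (abs_nonneg _) (hvpos 0 le_rfl).le).trans (le_c0Norm hbound le_rfl),
      c0Norm_le hbound⟩
  · exact entropyOn_eq_top_of_separated one_pos
      (fun k => (subset_iUnion (fun k => (↑(S k) : Set (ℝ → ℝ))) k).trans (subset_insert _ _))
      hSsep ht hgrowth
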